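/- arXiv:1210.3096 — 2 statements merged into one kernel-verified Lean document; each statement's English description precedes it below -/
import Mathlib

section
/- Let (f, g) be a pair with property (MB) on the cotensor coalgebra T_H^c(M), with associated product μ. Then the projection π: T_H^c(M) → H onto degree 0 is an algebra morphism if and only if g₀₀ = m_H (the multiplication of H) and g_{pq} = 0 for all (p,q) ≠ (0,0). In that case π is moreover a Hopf algebra morphism. -/
/-! Since `π ∘ μ = g`, the projection is multiplicative exactly when `g = m_H ∘ (π ⊗ π)`.
Both sides are linear, so this may be tested on `M^{□r} ⊗ M^{□s}`: there `π ⊗ π` vanishes unless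
`r = s = 0`, and on `ι(H) ⊗ ι(H)` it is inverse to `ι ⊗ ι` because `π ∘ ι = id`. -/

open TensorProduct

variable (k : Type) [Field k]

/-- A linear map between coalgebras is a coalgebra morphism. -/
def IsCoalgHom {X Y : Type} [AddCommGroup X] [Module k X] [Coalgebra k X]
    [AddCommGroup Y] [Module k Y] [Coalgebra k Y] (φ : X →ₗ[k] Y) : Prop :=
  Coalgebra.comul ∘ₗ φ = (TensorProduct.map φ φ) ∘ₗ Coalgebra.comul ∧
    Coalgebra.counit ∘ₗ φ = Coalgebra.counit

section MB

variable (H M C : Type)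
  [Ring H] [HopfAlgebra k H]
  [AddCommGroup M] [Module k M]
  [AddCommGroup C] [Module k C] [Coalgebra k C]

variable (aL : H ⊗[k] M →ₗ[k] M) (aR : M ⊗[k] H →ₗ[k] M)
  (δLM : M →ₗ[k] H ⊗[k] M) (δRM : M →ₗ[k] M ⊗[k] H)
  (actL : H ⊗[k] C →ₗ[k] C) (actR : C ⊗[k] H →ₗ[k] C)
  (π : C →ₗ[k] H) (p : C →ₗ[k] M) (ι : H →ₗ[k] C)

/-- The left `H`-coaction on `C = T_H^c(M)`: `(π ⊗ id) ∘ Δ`. -/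
noncomputable def deltaLC : C →ₗ[k] H ⊗[k] C :=
  (TensorProduct.map π LinearMap.id) ∘ₗ Coalgebra.comul

/-- The right `H`-coaction on `C = T_H^c(M)`: `(id ⊗ π) ∘ Δ`. -/
noncomputable def deltaRC : C →ₗ[k] C ⊗[k] H :=
  (TensorProduct.map LinearMap.id π) ∘ₗ Coalgebra.comul

/-- The left `H`-coaction on `C ⊗ C` coming from the tensor product of
bicomodules: `x ⊗ y ↦ Σ x₍₋₁₎ y₍₋₁₎ ⊗ (x₍₀₎ ⊗ y₍₀₎)`. -/
noncomputable def deltaL2 : C ⊗[k] C →ₗ[k] H ⊗[k] (C ⊗[k] C) :=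
  (TensorProduct.map (LinearMap.mul' k H) LinearMap.id)
    ∘ₗ (TensorProduct.tensorTensorTensorComm k H C H C).toLinearMap
    ∘ₗ (TensorProduct.map (deltaLC k H C π) (deltaLC k H C π))

/-- The right `H`-coaction on `C ⊗ C`. -/
noncomputable def deltaR2 : C ⊗[k] C →ₗ[k] (C ⊗[k] C) ⊗[k] H :=
  (TensorProduct.map LinearMap.id (LinearMap.mul' k H))
    ∘ₗ (TensorProduct.tensorTensorTensorComm k C H C H).toLinearMap
    ∘ₗ (TensorProduct.map (deltaRC k H C π) (deltaRC k H C π))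

variable (f : C ⊗[k] C →ₗ[k] M) (g : C ⊗[k] C →ₗ[k] H) (μ : C ⊗[k] C →ₗ[k] C)

/-- Property (MB1): `g` is a coalgebra morphism and `f` is an `H`-Hopf
bimodule morphism (for the external `H`-bimodule structure and the
tensor-product `H`-bicomodule structure on `C ⊗ C`) with `f₀₀ = 0`. -/
structure MB1 : Prop where
  g_coalg : IsCoalgHom k g
  f_left_mod : f ∘ₗ (TensorProduct.map actL LinearMap.id)
      ∘ₗ (TensorProduct.assoc k H C C).symm.toLinearMap
    = aL ∘ₗ (TensorProduct.map LinearMap.id f)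
  f_right_mod : f ∘ₗ (TensorProduct.map LinearMap.id actR)
      ∘ₗ (TensorProduct.assoc k C C H).toLinearMap
    = aR ∘ₗ (TensorProduct.map f LinearMap.id)
  f_left_com : δLM ∘ₗ f
    = (TensorProduct.map LinearMap.id f) ∘ₗ deltaL2 k H C π
  f_right_com : δRM ∘ₗ f
    = (TensorProduct.map f LinearMap.id) ∘ₗ deltaR2 k H C π
  f_00 : f ∘ₗ (TensorProduct.map ι ι) = 0

/-- Property (MB2) — associativity of `g`: summed over the components
`M^{□i} ⊗ M^{□j} ⊗ M^{□k}` it reads `g ∘ (μ ⊗ id) = g ∘ (id ⊗ μ)`, where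
`μ = g + Σ_{n ≥ 1} f^{⊗n} Δ^{(n)}` is the coalgebra map with `π ∘ μ = g` and
`p ∘ μ = f`. -/
def MB2 : Prop :=
  g ∘ₗ (TensorProduct.map μ LinearMap.id)
    = g ∘ₗ (TensorProduct.map LinearMap.id μ)
        ∘ₗ (TensorProduct.assoc k C C C).toLinearMap

/-- Property (MB3) — associativity of `f`. -/
def MB3 : Prop :=
  f ∘ₗ (TensorProduct.map μ LinearMap.id)
    = f ∘ₗ (TensorProduct.map LinearMap.id μ)
        ∘ₗ (TensorProduct.assoc k C C C).toLinearMap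

section Graded

variable {R A V W P : Type*} [CommSemiring R]
  [AddCommMonoid V] [Module R V] [AddCommMonoid W] [Module R W] [AddCommMonoid P] [Module R P]

theorem TensorProduct.ext_of_iSup_eq_top {ιV ιW : Type*} {U : ιV → Submodule R V}
    {U' : ιW → Submodule R W} (hU : ⨆ i, U i = ⊤) (hU' : ⨆ j, U' j = ⊤) {φ ψ : V ⊗[R] W →ₗ[R] P}
    (h : ∀ i j, ∀ x ∈ U i, ∀ y ∈ U' j, φ (x ⊗ₜ y) = ψ (x ⊗ₜ y)) : φ = ψ := by
  rw [Submodule.iSup_eq_span] at hU hU'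
  refine TensorProduct.ext (LinearMap.ext_on hU ?_)
  rintro x ⟨-, ⟨i, rfl⟩, hx⟩
  refine LinearMap.ext_on hU' ?_
  rintro y ⟨-, ⟨j, rfl⟩, hy⟩
  exact h i j x hx y hy

variable [Semiring A] [Algebra R A] (comp : ℕ → Submodule R V)

def IsGraded (ι : A →ₗ[R] V) (g : V ⊗[R] V →ₗ[R] A) : Prop :=
  (∀ a b : A, g (ι a ⊗ₜ ι b) = a * b) ∧
    ∀ r s : ℕ, ¬(r = 0 ∧ s = 0) → ∀ x ∈ comp r, ∀ y ∈ comp s, g (x ⊗ₜ y) = 0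

variable {π : V →ₗ[R] A} {ι : A →ₗ[R] V}

theorem mul_eq_zero_of_mem_comp (hπcomp : ∀ n, n ≠ 0 → ∀ x ∈ comp n, π x = 0) {r s : ℕ}
    (hrs : ¬(r = 0 ∧ s = 0)) {x y : V} (hx : x ∈ comp r) (hy : y ∈ comp s) : π x * π y = 0 := by
  by_cases hr : r = 0
  · rw [hπcomp s (fun hs => hrs ⟨hr, hs⟩) y hy, mul_zero]
  · rw [hπcomp r hr x hx, zero_mul]

theorem eq_mul_comp_map_iff_isGraded (htop : ⨆ n, comp n = ⊤) (hcomp0 : LinearMap.range ι = comp 0)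
    (hπι : π ∘ₗ ι = LinearMap.id) (hπcomp : ∀ n, n ≠ 0 → ∀ x ∈ comp n, π x = 0)
    (g : V ⊗[R] V →ₗ[R] A) :
    g = LinearMap.mul' R A ∘ₗ TensorProduct.map π π ↔ IsGraded comp ι g := by
  have hπιx (a : A) : π (ι a) = a := LinearMap.congr_fun hπι a
  constructor
  · rintro rfl
    refine ⟨fun a b => by simp [hπιx], fun r s hrs x hx y hy => ?_⟩
    simpa using mul_eq_zero_of_mem_comp comp hπcomp hrs hx hy
  · rintro ⟨h00, hrs⟩
    refine TensorProduct.ext_of_iSup_eq_top htop htop fun r s x hx y hy => ?_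
    simp only [LinearMap.comp_apply, TensorProduct.map_tmul, LinearMap.mul'_apply]
    by_cases h0 : r = 0 ∧ s = 0
    · obtain ⟨rfl, rfl⟩ := h0
      obtain ⟨a, rfl⟩ := hcomp0 ▸ hx
      obtain ⟨b, rfl⟩ := hcomp0 ▸ hy
      rw [h00, hπιx, hπιx]
    · rw [hrs r s h0 x hx y hy, mul_eq_zero_of_mem_comp comp hπcomp h0 hx hy]

end Graded

theorem projection_algebra_morphism_iff_graded
    (comp : ℕ → Submodule k C)
    (hinternal : DirectSum.IsInternal comp)
    (hcomp0 : LinearMap.range ι = comp 0)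
    (hπι : π ∘ₗ ι = LinearMap.id)
    (hπcomp : ∀ n : ℕ, n ≠ 0 → ∀ x ∈ comp n, π x = 0)
    (hπ : IsCoalgHom k π)
    (hπμ : π ∘ₗ μ = g) :
    ((π ∘ₗ μ = (LinearMap.mul' k H) ∘ₗ TensorProduct.map π π) ↔
      ((∀ a b : H, g (ι a ⊗ₜ[k] ι b) = a * b) ∧
        (∀ r s : ℕ, ¬(r = 0 ∧ s = 0) →
          ∀ x ∈ comp r, ∀ y ∈ comp s, g (x ⊗ₜ[k] y) = 0))) ∧
    -- if the pair is graded, `π` is a morphism of Hopf algebras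
    ((π ∘ₗ μ = (LinearMap.mul' k H) ∘ₗ TensorProduct.map π π) →
      (IsCoalgHom k π ∧
        π ∘ₗ μ = (LinearMap.mul' k H) ∘ₗ TensorProduct.map π π ∧
        π ∘ₗ ι ∘ₗ Algebra.linearMap k H = Algebra.linearMap k H)) := by
  rw [hπμ]
  refine ⟨eq_mul_comp_map_iff_isGraded comp hinternal.submodule_iSup_eq_top hcomp0 hπι hπcomp g,
    fun h => ⟨hπ, h, ?_⟩⟩
  rw [← LinearMap.comp_assoc, hπι, LinearMap.id_comp]

end MB
end

section
/- Let (H, K) be a Radford pair of Hopf algebras, i.e., there exist Hopf algebra morphisms i: H → K and p: K → H with p ∘ i = id_H. Then the subspace of right coinvariants R = K^{coH} = {k ∈ K : (id ⊗ p)Δ(k) = k ⊗ 1} is a subalgebra of K, and the map R ⊗ H → K, r ⊗ h ↦ r·i(h), is an isomorphism (of H-Hopf modules), giving K ≅ R # H. -/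
/-!
For a coalgebra map `f` into a Hopf algebra, `S ∘ f` is a two-sided inverse of `f` in the
convolution algebra. Hence `Π = id * (S ∘ i ∘ p)` satisfies `Π * (i ∘ p) = id`, so
`a ↦ Π(a₁) ⊗ p(a₂)` is a right inverse of `r ⊗ h ↦ r · i(h)` once `Π` lands in `R`.
That it does is an identity in the convolution monoid of maps `A → A ⊗ H`: the coaction
`ρ = (id ⊗ p) ∘ Δ` factors as `ι₁ * (ι₂ ∘ p)`, where `ι₁ a = a ⊗ 1` and `ι₂ h = 1 ⊗ h`,
whence `ρ ∘ Π = ρ * (ρ ∘ S ∘ i ∘ p) = ι₁ * (ι₁ ∘ S ∘ i ∘ p) = ι₁ ∘ Π`.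
For injectivity, `Π` is left `R`-linear and `Π ∘ i = ε`, so `(Π ⊗ id) ∘ ρ` sends `r · i(h)`
back to `r ⊗ h`.
-/

open TensorProduct Coalgebra HopfAlgebra WithConv

namespace RadfordPair

section Convolution

variable {K C D B : Type*} [CommSemiring K]
  [AddCommMonoid C] [Module K C] [Coalgebra K C]
  [AddCommMonoid D] [Module K D] [Coalgebra K D]
  [Semiring B] [Algebra K B]

lemma convOne_comp_coalgHom (f : D →ₗc[K] C) :
    (1 : WithConv (C →ₗ[K] B)).ofConv ∘ₗ f.toLinearMap = (1 : WithConv (D →ₗ[K] B)).ofConv := by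
  ext d; simp

lemma algHom_comp_convOne {B' : Type*} [Semiring B'] [Algebra K B'] (φ : B →ₐ[K] B') :
    φ.toLinearMap ∘ₗ (1 : WithConv (C →ₗ[K] B)).ofConv = (1 : WithConv (C →ₗ[K] B')).ofConv := by
  ext c; simp

lemma map_convOne_id_comul (c : C) :
    TensorProduct.map (1 : WithConv (C →ₗ[K] B)).ofConv LinearMap.id (comul c) = 1 ⊗ₜ c := by
  rw [LinearMap.convOne_def, ofConv_toConv, ← LinearMap.rTensor_comp_map, LinearMap.comp_apply,
    ← LinearMap.rTensor_def, rTensor_counit_comul, LinearMap.rTensor_tmul, Algebra.linearMap_apply,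
    map_one]

end Convolution

section Antipode

variable {K C B : Type*} [CommSemiring K]
  [AddCommMonoid C] [Module K C] [Coalgebra K C] [Semiring B] [HopfAlgebra K B]

lemma antipode_comp_convMul_self (f : C →ₗc[K] B) :
    toConv (antipode K ∘ₗ f.toLinearMap) * toConv f.toLinearMap = 1 := by
  ext1
  rw [← convOne_comp_coalgHom f, ← LinearMap.antipode_mul_id,
    LinearMap.convMul_comp_coalgHom_distrib]
  rfl

lemma self_convMul_antipode_comp (f : C →ₗc[K] B) :
    toConv f.toLinearMap * toConv (antipode K ∘ₗ f.toLinearMap) = 1 := by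
  ext1
  rw [← convOne_comp_coalgHom f, ← LinearMap.id_mul_antipode,
    LinearMap.convMul_comp_coalgHom_distrib]
  rfl

end Antipode

section Coaction

variable {K A H : Type*} [CommSemiring K] [Semiring A] [Bialgebra K A] [Semiring H] [Bialgebra K H]

def coaction (p : A →ₐc[K] H) : A →ₐ[K] A ⊗[K] H :=
  (Algebra.TensorProduct.map (AlgHom.id K A) (p : A →ₐ[K] H)).comp (Bialgebra.comulAlgHom K A)

lemma coaction_apply (p : A →ₐc[K] H) (a : A) :
    coaction p a = TensorProduct.map LinearMap.id p.toLinearMap (comul a) := rfl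

def coinvariants (p : A →ₐc[K] H) : Subalgebra K A :=
  AlgHom.equalizer (coaction p) Algebra.TensorProduct.includeLeft

lemma mem_coinvariants {p : A →ₐc[K] H} {a : A} :
    a ∈ coinvariants p ↔ coaction p a = a ⊗ₜ 1 :=
  AlgHom.mem_equalizer _ _ a

lemma coaction_eq_convMul (p : A →ₐc[K] H) :
    toConv (coaction p).toLinearMap =
      toConv (Algebra.TensorProduct.includeLeft (S := K) (B := H)).toLinearMap *
        toConv ((Algebra.TensorProduct.includeRight (A := A)).toLinearMap ∘ₗ p.toLinearMap) := by
  ext a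
  simp [(ℛ K a).convMul_apply, coaction_apply, ← (ℛ K a).eq, map_sum]

lemma coaction_apply_section (i : H →ₐc[K] A) (p : A →ₐc[K] H) (hpi : ∀ h, p (i h) = h) (h : H) :
    coaction p (i h) = TensorProduct.map i.toLinearMap LinearMap.id (comul h) := by
  simp [coaction_apply, ← CoalgHomClass.map_comp_comul_apply i, ← (ℛ K h).eq,
    BialgHom.toCoalgHom_apply, hpi]

end Coaction

section Projection

variable {K A H : Type*} [CommSemiring K] [Semiring A] [HopfAlgebra K A]
  [Semiring H] [Bialgebra K H]

noncomputable def coinvariantProjection (i : H →ₐc[K] A) (p : A →ₐc[K] H) : A →ₗ[K] A :=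
  (toConv LinearMap.id * toConv (antipode K ∘ₗ (i.comp p).toLinearMap)).ofConv

variable (i : H →ₐc[K] A) (p : A →ₐc[K] H)

lemma coinvariantProjection_convMul :
    toConv (coinvariantProjection i p) * toConv (i.comp p).toLinearMap = toConv LinearMap.id := by
  rw [coinvariantProjection, toConv_ofConv, mul_assoc,
    antipode_comp_convMul_self (i.comp p).toCoalgHom, mul_one]

lemma coaction_comp_coinvariantProjection (hpi : ∀ h, p (i h) = h) :
    (coaction p).toLinearMap ∘ₗ coinvariantProjection i p =
      Algebra.TensorProduct.includeLeft.toLinearMap ∘ₗ coinvariantProjection i p := by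
  set J : A →ₗc[K] A := (i.comp p).toCoalgHom
  set c : A →ₗ[K] A ⊗[K] H := (coaction p).toLinearMap
  set ι₁ : A →ₗ[K] A ⊗[K] H := (Algebra.TensorProduct.includeLeft (S := K) (B := H)).toLinearMap
  set ι₂p : A →ₗ[K] A ⊗[K] H :=
    (Algebra.TensorProduct.includeRight (A := A)).toLinearMap ∘ₗ p.toLinearMap
  have hpJ : p.toLinearMap ∘ₗ J.toLinearMap = p.toLinearMap := by
    ext a; exact hpi (p a)
  have hc : toConv c = toConv ι₁ * toConv ι₂p := coaction_eq_convMul p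
  have hcJ : toConv (c ∘ₗ J.toLinearMap) = toConv (ι₁ ∘ₗ J.toLinearMap) * toConv ι₂p := by
    have hι₂pJ : ι₂p ∘ₗ J.toLinearMap = ι₂p := by rw [LinearMap.comp_assoc, hpJ]
    rw [← hι₂pJ, ← toConv_ofConv (_ * _), ← LinearMap.convMul_comp_coalgHom_distrib, ← hc]
  have hι₁ : toConv (ι₁ ∘ₗ antipode K ∘ₗ J.toLinearMap) * toConv (ι₁ ∘ₗ J.toLinearMap) = 1 := by
    apply ofConv_injective
    rw [← algHom_comp_convOne Algebra.TensorProduct.includeLeft, ← antipode_comp_convMul_self J,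
      LinearMap.algHom_comp_convMul_distrib]
  have hcJ_inv : toConv (c ∘ₗ J.toLinearMap) * toConv (c ∘ₗ antipode K ∘ₗ J.toLinearMap) = 1 := by
    apply ofConv_injective
    rw [← algHom_comp_convOne (coaction p), ← self_convMul_antipode_comp J,
      LinearMap.algHom_comp_convMul_distrib]
  apply toConv_injective
  calc toConv (c ∘ₗ coinvariantProjection i p)
      = toConv c * toConv (c ∘ₗ antipode K ∘ₗ J.toLinearMap) := by
        rw [coinvariantProjection, LinearMap.algHom_comp_convMul_distrib]
        rfl
    _ = toConv ι₁ * toConv (ι₁ ∘ₗ antipode K ∘ₗ J.toLinearMap) *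
          (toConv (c ∘ₗ J.toLinearMap) * toConv (c ∘ₗ antipode K ∘ₗ J.toLinearMap)) := by
        rw [hc, hcJ]
        simp only [mul_assoc]
        rw [← mul_assoc (toConv (ι₁ ∘ₗ antipode K ∘ₗ J.toLinearMap)), hι₁, one_mul]
    _ = toConv (ι₁ ∘ₗ coinvariantProjection i p) := by
        rw [hcJ_inv, mul_one, coinvariantProjection, LinearMap.algHom_comp_convMul_distrib]
        rfl

lemma coinvariantProjection_mul (a x : A) :
    coinvariantProjection i p (a * x) =
      LinearMap.mul' K A (TensorProduct.map (LinearMap.mulRight K (coinvariantProjection i p x))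
        (antipode K ∘ₗ (i.comp p).toLinearMap) (comul a)) := by
  simp only [coinvariantProjection, ((ℛ K a).mul (ℛ K x)).convMul_apply, (ℛ K x).convMul_apply,
    ← (ℛ K a).eq]
  simp [BialgHom.toCoalgHom_apply, Finset.sum_product, Finset.mul_sum, Finset.sum_mul,
    antipode_mul_antidistrib, mul_assoc]

lemma map_id_comp_comul_of_mem_coinvariants {r : A} (hr : r ∈ coinvariants p) :
    TensorProduct.map LinearMap.id (i.comp p).toLinearMap (comul r) = r ⊗ₜ 1 := by
  have : TensorProduct.map (LinearMap.id : A →ₗ[K] A) (i.comp p).toLinearMap =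
      TensorProduct.map LinearMap.id i.toLinearMap ∘ₗ
        TensorProduct.map LinearMap.id p.toLinearMap := by
    rw [← TensorProduct.map_comp]; rfl
  rw [this, LinearMap.comp_apply, ← coaction_apply, mem_coinvariants.1 hr]
  simp [BialgHom.toCoalgHom_apply]

lemma coinvariantProjection_mul_of_mem {r : A} (hr : r ∈ coinvariants p) (x : A) :
    coinvariantProjection i p (r * x) = r * coinvariantProjection i p x := by
  have : TensorProduct.map (LinearMap.mulRight K (coinvariantProjection i p x))
        (antipode K ∘ₗ (i.comp p).toLinearMap) =
      TensorProduct.map (LinearMap.mulRight K (coinvariantProjection i p x)) (antipode K) ∘ₗ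
        TensorProduct.map LinearMap.id (i.comp p).toLinearMap := by
    rw [← TensorProduct.map_comp]; rfl
  rw [coinvariantProjection_mul, this, LinearMap.comp_apply,
    map_id_comp_comul_of_mem_coinvariants i p hr]
  simp

lemma coinvariantProjection_comp_section (hpi : ∀ h, p (i h) = h) :
    coinvariantProjection i p ∘ₗ i.toLinearMap = (1 : WithConv (H →ₗ[K] A)).ofConv := by
  have hJi : (i.comp p).toLinearMap ∘ₗ i.toLinearMap = i.toLinearMap := by
    ext h; simp [BialgHom.toCoalgHom_apply, hpi]
  rw [← convOne_comp_coalgHom i.toCoalgHom, ← LinearMap.id_mul_antipode,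
    LinearMap.convMul_comp_coalgHom_distrib, coinvariantProjection,
    LinearMap.convMul_comp_coalgHom_distrib]
  simp only [LinearMap.comp_assoc, hJi]

lemma rTensor_coinvariantProjection_mul_of_mem {r : A} (hr : r ∈ coinvariants p) (t : A ⊗[K] H) :
    (coinvariantProjection i p).rTensor H ((r ⊗ₜ 1) * t) =
      (r ⊗ₜ 1) * (coinvariantProjection i p).rTensor H t := by
  induction t using TensorProduct.induction_on with
  | zero => simp
  | tmul x h => simp [coinvariantProjection_mul_of_mem i p hr]
  | add t₁ t₂ ht₁ ht₂ => simp only [mul_add, map_add, ht₁, ht₂]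

lemma rTensor_coinvariantProjection_coaction_mul_section (hpi : ∀ h, p (i h) = h)
    {r : A} (hr : r ∈ coinvariants p) (h : H) :
    (coinvariantProjection i p).rTensor H (coaction p (r * i h)) = r ⊗ₜ h := by
  rw [map_mul, mem_coinvariants.1 hr, rTensor_coinvariantProjection_mul_of_mem i p hr,
    coaction_apply_section i p hpi, ← LinearMap.comp_apply (LinearMap.rTensor _ _),
    LinearMap.rTensor_comp_map, coinvariantProjection_comp_section i p hpi]
  rw [map_convOne_id_comul, Algebra.TensorProduct.tmul_mul_tmul, mul_one, one_mul]

lemma coinvariantProjection_mem (hpi : ∀ h, p (i h) = h) (a : A) :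
    coinvariantProjection i p a ∈ coinvariants p :=
  mem_coinvariants.2 (LinearMap.congr_fun (coaction_comp_coinvariantProjection i p hpi) a)

theorem surjective_mul_map_subtype (hpi : ∀ h, p (i h) = h) :
    Function.Surjective (LinearMap.mul' K A ∘ₗ
      TensorProduct.map (Subalgebra.toSubmodule (coinvariants p)).subtype i.toLinearMap) := by
  set R := Subalgebra.toSubmodule (coinvariants p)
  set ψ := TensorProduct.map ((coinvariantProjection i p).codRestrict R
    (coinvariantProjection_mem i p hpi)) p.toLinearMap
  have hψ : (LinearMap.mul' K A ∘ₗ TensorProduct.map R.subtype i.toLinearMap) ∘ₗ ψ =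
      LinearMap.mul' K A ∘ₗ TensorProduct.map (coinvariantProjection i p) (i.comp p).toLinearMap :=
    TensorProduct.ext' fun _ _ => rfl
  intro a
  refine ⟨ψ (comul a), ?_⟩
  rw [← LinearMap.comp_apply _ ψ, hψ]
  exact congr(ofConv $(coinvariantProjection_convMul i p) a)

theorem injective_mul_map_subtype [Module.Flat K H] (hpi : ∀ h, p (i h) = h) :
    Function.Injective (LinearMap.mul' K A ∘ₗ
      TensorProduct.map (Subalgebra.toSubmodule (coinvariants p)).subtype i.toLinearMap) := by
  set R := Subalgebra.toSubmodule (coinvariants p)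
  have hleft : (coinvariantProjection i p).rTensor H ∘ₗ (coaction p).toLinearMap ∘ₗ
      LinearMap.mul' K A ∘ₗ TensorProduct.map R.subtype i.toLinearMap = R.subtype.rTensor H := by
    ext r h
    exact rTensor_coinvariantProjection_coaction_mul_section i p hpi r.2 h
  have hinj := Module.Flat.rTensor_preserves_injective_linearMap (M := H) _ R.injective_subtype
  rw [← hleft] at hinj
  exact Function.Injective.of_comp
    (f := (coinvariantProjection i p).rTensor H ∘ₗ (coaction p).toLinearMap) hinj

end Projection

end RadfordPair

/-- **Radford's theorem on Hopf algebras with a projection.**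
Let `(H, A)` be a Radford pair: `i : H → A` and `p : A → H` are Hopf algebra
morphisms (bialgebra morphisms of Hopf algebras) with `p ∘ i = id_H`.  Let
`R = A^{co H} = {a : (id ⊗ p) Δ a = a ⊗ 1}` be the subspace of right
coinvariants.  Then `R` is a subalgebra of `A`, and the multiplication map
`R ⊗ H → A`, `r ⊗ h ↦ r · i(h)`, is bijective and right `H`-linear, giving
the Hopf module isomorphism `A ≅ R # H`. -/
theorem radford_pair_coinvariants_bosonization
    (K H A : Type) [Field K]
    [Ring H] [HopfAlgebra K H]
    [Ring A] [HopfAlgebra K A]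
    (i : H →ₐc[K] A) (p : A →ₐc[K] H)
    (hpi : ∀ h : H, p (i h) = h)
    (R : Submodule K A)
    (hR : R = {a : A |
      (TensorProduct.map LinearMap.id p.toLinearMap) (Coalgebra.comul a)
        = a ⊗ₜ[K] (1 : H)}) :
    -- `R` is a subalgebra of `A`
    ((1 : A) ∈ R ∧ ∀ x ∈ R, ∀ y ∈ R, x * y ∈ R) ∧
    -- the map `r ⊗ h ↦ r · i(h)` is a linear isomorphism `R ⊗ H ≅ A`
    Function.Bijective
      (LinearMap.mul' K A ∘ₗ
        TensorProduct.map R.subtype i.toLinearMap :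
          R ⊗[K] H →ₗ[K] A) ∧
    -- and it intertwines the right `H`-module structures
    (∀ (r : R) (h h' : H),
      (LinearMap.mul' K A ∘ₗ TensorProduct.map R.subtype i.toLinearMap)
          (r ⊗ₜ[K] (h * h'))
        = (LinearMap.mul' K A ∘ₗ TensorProduct.map R.subtype i.toLinearMap)
            (r ⊗ₜ[K] h) * i h') := by
  have hR' : R = Subalgebra.toSubmodule (RadfordPair.coinvariants p) := by
    ext a
    rw [← SetLike.mem_coe, hR]
    exact RadfordPair.mem_coinvariants.symm
  subst hR'
  refine ⟨⟨Subalgebra.one_mem _, fun _ hx _ hy => Subalgebra.mul_mem _ hx hy⟩,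
    ⟨RadfordPair.injective_mul_map_subtype i p hpi,
      RadfordPair.surjective_mul_map_subtype i p hpi⟩, fun r h h' => ?_⟩
  simp [BialgHom.toCoalgHom_apply, mul_assoc]
end
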